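/- (Predecessor rule, Lemma 2 of the paper.) Assume that every u ∈ F admits a path from v0 to u, all of whose vertices lie in F, whose cost equals cost u. Let x ∉ F be a vertex all of whose in-neighbors are fixed, i.e., for every v with E v x one has v ∈ F. Then D x = cost x. -/

import Mathlib

open scoped ENNReal

variable {V : Type*}

/-- `IsPath E v0 x p` means `p` is a finite sequence of vertices starting at `v0`,
ending at `x`, with consecutive vertices joined by edges of `E`. -/
def IsPath (E : V → V → Prop) (v0 x : V) (p : List V) : Prop :=
  p.Chain' E ∧ p.head? = some v0 ∧ p.getLast? = some x

/-- The cost of a path: the sum of the weights of its consecutive edges. -/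
noncomputable def pathCost (w : V → V → ℝ≥0∞) (p : List V) : ℝ≥0∞ :=
  ((p.zip p.tail).map fun q => w q.1 q.2).sum

/-- `cost E w v0 x` : the infimum of the costs of all paths from `v0` to `x`
(`∞` if `x` is unreachable from `v0`). -/
noncomputable def cost (E : V → V → Prop) (w : V → V → ℝ≥0∞) (v0 x : V) : ℝ≥0∞ :=
  ⨅ p : {p : List V // IsPath E v0 x p}, pathCost w p.1

/-- An `F`-path from `v0` to `x` : a path all of whose vertices other than the
final vertex `x` lie in `F`. `Dfun E w v0 F x` is the infimum of the costs of
`F`-paths from `v0` to `x` (`∞` if no `F`-path to `x` exists). -/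
noncomputable def Dfun (E : V → V → Prop) (w : V → V → ℝ≥0∞) (v0 : V) (F : Set V)
    (x : V) : ℝ≥0∞ :=
  ⨅ p : {p : List V // IsPath E v0 x p ∧ ∀ v ∈ p.dropLast, v ∈ F}, pathCost w p.1

/-!
Every path to `x ∉ F` (so of positive length, as `v0 ∈ F`) enters `x` through an in-neighbour
`u ∈ F`. Replacing its part up to `u` by an optimal path inside `F` yields an `F`-path to `x`
that costs no more, so `D x ≤ cost x`; the reverse inequality holds because `F`-paths are paths.
-/

section Paths

variable {E : V → V → Prop} {w : V → V → ℝ≥0∞} {v0 u x : V} {F : Set V} {p : List V}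

theorem pathCost_cons_cons (w : V → V → ℝ≥0∞) (a b : V) (l : List V) :
    pathCost w (a :: b :: l) = w a b + pathCost w (b :: l) := by
  simp [pathCost]

theorem pathCost_append_singleton (hu : p.getLast? = some u) (x : V) :
    pathCost w (p ++ [x]) = pathCost w p + w u x := by
  induction p with
  | nil => simp at hu
  | cons a t ih =>
    cases t with
    | nil =>
      obtain rfl : a = u := by simpa using hu
      simp [pathCost]
    | cons b s =>
      simp only [List.cons_append] at ih ⊢
      rw [pathCost_cons_cons, pathCost_cons_cons, ih (by simpa using hu), add_assoc]

theorem IsPath.ne_nil (h : IsPath E v0 x p) : p ≠ [] := by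
  rintro rfl
  simp [IsPath] at h

theorem IsPath.append_singleton (h : IsPath E v0 u p) (hux : E u x) :
    IsPath E v0 x (p ++ [x]) := by
  obtain ⟨hchain, hhead, hlast⟩ := h
  refine ⟨List.isChain_append.mpr ⟨hchain, List.isChain_singleton x, ?_⟩, ?_, by simp⟩
  · simp [hlast, hux]
  · rwa [List.head?_append_of_ne_nil _ (IsPath.ne_nil ⟨hchain, hhead, hlast⟩)]

theorem IsPath.exists_eq_append_singleton (h : IsPath E v0 x p) (hne : v0 ≠ x) :
    ∃ q u, p = q ++ [x] ∧ IsPath E v0 u q ∧ E u x := by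
  obtain ⟨hchain, hhead, hlast⟩ := h
  obtain ⟨q, y, rfl⟩ := (List.eq_nil_or_concat' p).resolve_left (by rintro rfl; simp at hhead)
  obtain rfl : x = y := by simpa using hlast.symm
  have hq : q ≠ [] := by
    rintro rfl
    exact hne (by simpa using hhead.symm)
  obtain ⟨u, hu⟩ := Option.ne_none_iff_exists'.mp (mt List.getLast?_eq_none_iff.mp hq)
  obtain ⟨hcq, -, hux⟩ := List.isChain_append.mp hchain
  refine ⟨q, u, rfl, ⟨hcq, ?_, hu⟩, hux u hu x rfl⟩
  rwa [List.head?_append_of_ne_nil _ hq] at hhead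

theorem cost_le_pathCost (h : IsPath E v0 x p) : cost E w v0 x ≤ pathCost w p :=
  iInf_le_of_le ⟨p, h⟩ le_rfl

theorem Dfun_le_pathCost (h : IsPath E v0 x p) (hF : ∀ v ∈ p.dropLast, v ∈ F) :
    Dfun E w v0 F x ≤ pathCost w p :=
  iInf_le_of_le ⟨p, h, hF⟩ le_rfl

theorem cost_le_Dfun : cost E w v0 x ≤ Dfun E w v0 F x :=
  le_iInf fun p => cost_le_pathCost p.2.1

theorem Dfun_le_cost_add (hu : ∃ p : List V, IsPath E v0 u p ∧ (∀ v ∈ p, v ∈ F) ∧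
      pathCost w p = cost E w v0 u) (hux : E u x) :
    Dfun E w v0 F x ≤ cost E w v0 u + w u x := by
  obtain ⟨p, hp, hpF, hpc⟩ := hu
  calc Dfun E w v0 F x ≤ pathCost w (p ++ [x]) :=
        Dfun_le_pathCost (hp.append_singleton hux) (by rwa [List.dropLast_concat])
    _ = cost E w v0 u + w u x := by rw [pathCost_append_singleton hp.2.2, hpc]

end Paths

theorem predecessor_rule_general (E : V → V → Prop) (w : V → V → ℝ≥0∞)
    (v0 : V) (F : Set V) (hv0 : v0 ∈ F)
    (hF : ∀ u ∈ F, ∃ p : List V, IsPath E v0 u p ∧ (∀ v ∈ p, v ∈ F) ∧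
      pathCost w p = cost E w v0 u)
    (x : V) (hx : x ∉ F) (hpred : ∀ v, E v x → v ∈ F) :
    Dfun E w v0 F x = cost E w v0 x := by
  refine le_antisymm (le_iInf fun ⟨p, hp⟩ => ?_) cost_le_Dfun
  obtain ⟨q, u, rfl, hq, hux⟩ := hp.exists_eq_append_singleton (by rintro rfl; exact hx hv0)
  calc Dfun E w v0 F x ≤ cost E w v0 u + w u x := Dfun_le_cost_add (hF u (hpred u hux)) hux
    _ ≤ pathCost w q + w u x := by gcongr; exact cost_le_pathCost hq
    _ = pathCost w (q ++ [x]) := (pathCost_append_singleton hq.2.2 x).symm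

/-- Predecessor rule (Lemma 2): if every fixed vertex has a minimum-cost path lying
entirely inside `F`, and `x ∉ F` has all its in-neighbors in `F`, then `D x = cost x`. -/
theorem predecessor_rule [Fintype V] (E : V → V → Prop) (w : V → V → ℝ≥0∞)
    (hpos : ∀ u v, E u v → 0 < w u v) (hfin : ∀ u v, E u v → w u v < ⊤)
    (v0 : V) (F : Set V) (hv0 : v0 ∈ F)
    (hF : ∀ u ∈ F, ∃ p : List V, IsPath E v0 u p ∧ (∀ v ∈ p, v ∈ F) ∧
      pathCost w p = cost E w v0 u)
    (x : V) (hx : x ∉ F) (hpred : ∀ v, E v x → v ∈ F) :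
    Dfun E w v0 F x = cost E w v0 x :=
  predecessor_rule_general E w v0 F hv0 hF x hx hpred
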